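/- Let A be a finite set of positive real numbers. Then max{|A+A|, |A/A|} ≥ |A|^{4/3} / 2. -/

import Mathlib

/-!
The points of `A × A` lie on the `|A / A|` lines `{(a, b) | a / b = r}`, `r ∈ A / A`, through the
origin, `|A|²` points in total. If `|A / A| < |A|^{4/3} / 2`, the lines carrying at least
`|A|^{2/3}` points each hold together more than `|A|² / 2` points. For two consecutive such
lines `ℓ < ℓ'`, the sums `ℓ + ℓ'` are `|ℓ| |ℓ'|` distinct points of `(A + A) × (A + A)` lying
strictly between the two lines, so these sets are disjoint and
`|A + A|² ≥ |A|^{2/3} (|A|² / 2 - |A|) ≥ |A|^{8/3} / 4` once `|A| > 8`;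
for smaller `A` already `|A + A| ≥ |A|` suffices.
-/

open Finset Pointwise

section Field

variable {K : Type*} [Field K] [DecidableEq K] {A : Finset K} {r s : K} {p : K × K}

def ratioFiber (A : Finset K) (r : K) : Finset (K × K) := {p ∈ A ×ˢ A | p.1 / p.2 = r}

lemma sum_card_ratioFiber (A : Finset K) : ∑ r ∈ A / A, #(ratioFiber A r) = #A ^ 2 := by
  rw [sq, ← card_product]
  exact (card_eq_sum_card_fiberwise fun p hp =>
    div_mem_div (mem_product.1 hp).1 (mem_product.1 hp).2).symm

lemma ratioFiber_subset_product : ratioFiber A r ⊆ A ×ˢ A := filter_subset _ _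

lemma fst_eq_mul_snd_of_mem_ratioFiber (h0 : 0 ∉ A) (hp : p ∈ ratioFiber A r) :
    p.1 = r * p.2 := by
  obtain ⟨hpA, rfl⟩ := mem_filter.1 hp
  exact (div_mul_cancel₀ _ (ne_of_mem_of_not_mem (mem_product.1 hpA).2 h0)).symm

lemma card_ratioFiber_le (h0 : 0 ∉ A) (r : K) : #(ratioFiber A r) ≤ #A := by
  refine card_le_card_of_injOn Prod.snd
    (fun p hp => (mem_product.1 (ratioFiber_subset_product hp)).2) fun p hp q hq hpq => ?_
  have h1 : p.1 = q.1 := by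
    rw [fst_eq_mul_snd_of_mem_ratioFiber h0 hp, fst_eq_mul_snd_of_mem_ratioFiber h0 hq, hpq]
  exact Prod.ext h1 hpq

/-- Two points on distinct lines through the origin are recovered from their sum. -/
lemma card_ratioFiber_add_ratioFiber (h0 : 0 ∉ A) (hrs : r ≠ s) :
    #(ratioFiber A r + ratioFiber A s) = #(ratioFiber A r) * #(ratioFiber A s) := by
  refine card_add_iff.2 fun ⟨p, q⟩ hpq ⟨p', q'⟩ hpq' h => ?_
  simp only [Set.mem_prod, mem_coe] at hpq hpq'
  have hp := fst_eq_mul_snd_of_mem_ratioFiber h0 hpq.1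
  have hq := fst_eq_mul_snd_of_mem_ratioFiber h0 hpq.2
  have hp' := fst_eq_mul_snd_of_mem_ratioFiber h0 hpq'.1
  have hq' := fst_eq_mul_snd_of_mem_ratioFiber h0 hpq'.2
  obtain ⟨h1, h2⟩ := Prod.ext_iff.1 h
  simp only [Prod.fst_add, Prod.snd_add] at h1 h2
  have hp2 : p.2 = p'.2 := by
    have : (r - s) * (p.2 - p'.2) = 0 := by linear_combination h1 - hp - hq + hp' + hq' - s * h2
    exact sub_eq_zero.1 ((mul_eq_zero.1 this).resolve_left (sub_ne_zero.2 hrs))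
  have hq2 : q.2 = q'.2 := by linear_combination h2 - hp2
  simp only [Prod.mk.injEq]
  exact ⟨Prod.ext (by rw [hp, hp', hp2]) hp2, Prod.ext (by rw [hq, hq', hq2]) hq2⟩

lemma ratioFiber_add_ratioFiber_subset : ratioFiber A r + ratioFiber A s ⊆ (A + A) ×ˢ (A + A) :=
  product_add_product_comm A A A A ▸
    add_subset_add ratioFiber_subset_product ratioFiber_subset_product

lemma sq_card_le_sum_filter_add (A : Finset K) {t : ℝ} (ht : 0 ≤ t) :
    (#A : ℝ) ^ 2 ≤
      ∑ r ∈ A / A with t ≤ #(ratioFiber A r), (#(ratioFiber A r) : ℝ) + #(A / A) * t := by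
  have hlight : ∑ r ∈ A / A with ¬ t ≤ #(ratioFiber A r), (#(ratioFiber A r) : ℝ)
      ≤ #(A / A) * t :=
    calc _ ≤ #{r ∈ A / A | ¬ t ≤ (#(ratioFiber A r) : ℝ)} • t :=
          sum_le_card_nsmul _ _ _ fun r hr => (not_le.1 (mem_filter.1 hr).2).le
      _ ≤ #(A / A) * t := by
          rw [nsmul_eq_mul]; gcongr; exact filter_subset _ _
  have htotal : (#A : ℝ) ^ 2 = ∑ r ∈ A / A, (#(ratioFiber A r) : ℝ) := by
    exact_mod_cast (sum_card_ratioFiber A).symm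
  rw [htotal, ← sum_filter_add_sum_filter_not (A / A) fun r => t ≤ (#(ratioFiber A r) : ℝ)]
  linarith

end Field

section OrderedField

variable {K : Type*} [Field K] [LinearOrder K] [IsStrictOrderedRing K] [DecidableEq K]
  {A : Finset K} {r s : K}

lemma div_mem_Ioo_of_mem_ratioFiber_add_ratioFiber (hA : ∀ a ∈ A, 0 < a) (hrs : r < s)
    {z : K × K} (hz : z ∈ ratioFiber A r + ratioFiber A s) : z.1 / z.2 ∈ Set.Ioo r s := by
  have h0 : 0 ∉ A := fun h => lt_irrefl _ (hA 0 h)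
  obtain ⟨p, hp, q, hq, rfl⟩ := mem_add.1 hz
  have hp2 : 0 < p.2 := hA _ (mem_product.1 (ratioFiber_subset_product hp)).2
  have hq2 : 0 < q.2 := hA _ (mem_product.1 (ratioFiber_subset_product hq)).2
  simp only [Prod.fst_add, Prod.snd_add, fst_eq_mul_snd_of_mem_ratioFiber h0 hp,
    fst_eq_mul_snd_of_mem_ratioFiber h0 hq]
  constructor
  · rw [lt_div_iff₀ (add_pos hp2 hq2)]; nlinarith
  · rw [div_lt_iff₀ (add_pos hp2 hq2)]; nlinarith

lemma sum_card_ratioFiber_mul_succ_le {k : ℕ} (hA : ∀ a ∈ A, 0 < a) {r : Fin (k + 1) → K}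
    (hr : StrictMono r) :
    ∑ i : Fin k, #(ratioFiber A (r i.castSucc)) * #(ratioFiber A (r i.succ)) ≤ #(A + A) ^ 2 := by
  have h0 : 0 ∉ A := fun h => lt_irrefl _ (hA 0 h)
  have hdisj : ((univ : Finset (Fin k)) : Set (Fin k)).PairwiseDisjoint
      fun i => ratioFiber A (r i.castSucc) + ratioFiber A (r i.succ) := by
    have hdisj_of_lt {i j : Fin k} (hij : i < j) :
        Disjoint (ratioFiber A (r i.castSucc) + ratioFiber A (r i.succ))
          (ratioFiber A (r j.castSucc) + ratioFiber A (r j.succ)) := by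
      refine disjoint_left.2 fun z hzi hzj => ?_
      have hi := div_mem_Ioo_of_mem_ratioFiber_add_ratioFiber hA (hr i.castSucc_lt_succ) hzi
      have hj := div_mem_Ioo_of_mem_ratioFiber_add_ratioFiber hA (hr j.castSucc_lt_succ) hzj
      have : r i.succ ≤ r j.castSucc := hr.monotone (Fin.succ_le_castSucc_iff.2 hij)
      exact lt_irrefl _ (hi.2.trans (this.trans_lt hj.1))
    exact fun i _ j _ hij => hij.lt_or_gt.elim hdisj_of_lt fun h => (hdisj_of_lt h).symm
  calc _ = ∑ i : Fin k, #(ratioFiber A (r i.castSucc) + ratioFiber A (r i.succ)) :=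
        sum_congr rfl fun i _ =>
          (card_ratioFiber_add_ratioFiber h0 (hr i.castSucc_lt_succ).ne).symm
    _ = #(univ.biUnion fun i : Fin k => ratioFiber A (r i.castSucc) + ratioFiber A (r i.succ)) :=
        (card_biUnion hdisj).symm
    _ ≤ #((A + A) ×ˢ (A + A)) :=
        card_le_card (biUnion_subset.2 fun _ _ => ratioFiber_add_ratioFiber_subset)
    _ = #(A + A) ^ 2 := by rw [card_product, sq]

lemma mul_sum_card_ratioFiber_sub_card_le (hA : ∀ a ∈ A, 0 < a) {R : Finset K} {t : ℝ}
    (ht : 0 ≤ t) (hR : ∀ r ∈ R, t ≤ #(ratioFiber A r)) :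
    t * (∑ r ∈ R, (#(ratioFiber A r) : ℝ) - #A) ≤ #(A + A) ^ 2 := by
  have h0 : 0 ∉ A := fun h => lt_irrefl _ (hA 0 h)
  cases hk : #R with
  | zero =>
    rw [card_eq_zero.1 hk, sum_empty]
    nlinarith [mul_nonneg ht (Nat.cast_nonneg (α := ℝ) #A), sq_nonneg (#(A + A) : ℝ)]
  | succ k =>
    set e := R.orderEmbOfFin hk
    have hsum : ∑ r ∈ R, (#(ratioFiber A r) : ℝ) =
        #(ratioFiber A (e 0)) + ∑ i : Fin k, (#(ratioFiber A (e i.succ)) : ℝ) := by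
      rw [← map_orderEmbOfFin_univ R hk, sum_map, Fin.sum_univ_succ]
      rfl
    have hfirst : (#(ratioFiber A (e 0)) : ℝ) ≤ #A := by exact_mod_cast card_ratioFiber_le h0 _
    calc t * (∑ r ∈ R, (#(ratioFiber A r) : ℝ) - #A)
        ≤ ∑ i : Fin k, t * #(ratioFiber A (e i.succ)) := by
          rw [hsum, ← mul_sum]; gcongr; linarith
      _ ≤ ∑ i : Fin k, (#(ratioFiber A (e i.castSucc)) : ℝ) * #(ratioFiber A (e i.succ)) := by
          gcongr with i; exact hR _ (orderEmbOfFin_mem R hk _)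
      _ ≤ #(A + A) ^ 2 := by exact_mod_cast sum_card_ratioFiber_mul_succ_le hA e.strictMono

end OrderedField

theorem sum_division_max (A : Finset ℝ) (hA : ∀ a ∈ A, 0 < a) :
    (max ((A + A).card) ((A / A).card) : ℝ) ≥ (A.card : ℝ) ^ ((4 : ℝ) / 3) / 2 := by
  set x : ℝ := (#A : ℝ) ^ ((1 : ℝ) / 3)
  have hx0 : 0 ≤ x := by positivity
  have hx3 : x ^ 3 = #A := by
    rw [← Real.rpow_natCast, ← Real.rpow_mul (Nat.cast_nonneg _)]; norm_num
  have hx4 : (#A : ℝ) ^ ((4 : ℝ) / 3) = x ^ 4 := by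
    rw [← Real.rpow_natCast, ← Real.rpow_mul (Nat.cast_nonneg _)]; norm_num
  have hsum : x ^ 3 ≤ #(A + A) := by rw [hx3]; exact_mod_cast card_le_card_add_self
  rw [hx4, ge_iff_le]
  rcases le_or_gt x 2 with hsmall | hlarge
  · exact le_max_of_le_left (by nlinarith [pow_nonneg hx0 3])
  rcases le_or_gt (x ^ 4 / 2) (#(A / A) : ℝ) with hratio | hratio
  · exact le_max_of_le_right hratio
  refine le_max_of_le_left ?_
  set S := ∑ r ∈ A / A with x ^ 2 ≤ (#(ratioFiber A r) : ℝ), (#(ratioFiber A r) : ℝ)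
  have hrich : x ^ 6 / 2 ≤ S := by
    have := sq_card_le_sum_filter_add A (sq_nonneg x)
    rw [← hx3] at this
    nlinarith [mul_le_mul_of_nonneg_right hratio.le (sq_nonneg x)]
  have henergy : x ^ 2 * (S - x ^ 3) ≤ #(A + A) ^ 2 := hx3 ▸
    mul_sum_card_ratioFiber_sub_card_le hA (sq_nonneg x) fun r hr => (mem_filter.1 hr).2
  have hsq : (x ^ 4 / 2) ^ 2 ≤ (#(A + A) : ℝ) ^ 2 :=
    calc (x ^ 4 / 2) ^ 2 ≤ x ^ 2 * (x ^ 6 / 2 - x ^ 3) := by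
          nlinarith [pow_pos (two_pos.trans hlarge) 5, pow_lt_pow_left₀ hlarge zero_le_two
            three_ne_zero]
      _ ≤ x ^ 2 * (S - x ^ 3) := by gcongr
      _ ≤ #(A + A) ^ 2 := henergy
  exact (pow_le_pow_iff_left₀ (by positivity) (Nat.cast_nonneg _) two_ne_zero).1 hsq
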